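/- arXiv:1601.08025 — 4 statements merged into one kernel-verified Lean document; each statement's English description precedes it below -/
import Mathlib

section
/- For every a = (a_1, …, a_d) ∈ (0, ∞)^d, the infimum, over all nonzero u ∈ ℝ^d, of the Lebesgue measure of [0, ∞)^d ∩ {z ∈ ℝ^d : ⟨u, z⟩ ≤ ⟨u, a⟩} equals (d^d / d!) · ∏_{i=1}^d a_i, and this infimum is attained by the half-space {z : ∑_{i=1}^d z_i/a_i ≤ d} (i.e., by u = (1/a_1, …, 1/a_d)). In other words, among all closed half-spaces whose boundary hyperplane passes through a, the one tangent to the pseudo-hyperboloid {z ∈ (0,∞)^d : ∏ z_i = ∏ a_i} at a cuts off the smallest volume from the orthant. -/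
/-!
Let `c = ⟨u, a⟩`. If some `uᵢ ≤ 0`, the cap `orthantCap u c` contains a box that is unbounded
in the `i`-th direction, so its volume is infinite. If `u > 0`, the cap is a simplex of volume
`cᵈ / (d! ∏ uᵢ)` (slice along the first coordinate and induct on `d`). AM-GM for the numbers
`uᵢ aᵢ` gives `cᵈ ≥ dᵈ ∏ uᵢ aᵢ`, with equality when all `uᵢ aᵢ` are equal, i.e. for `u = 1 / a`.
-/

open MeasureTheory

theorem card_pow_mul_prod_le_sum_pow {ι : Type*} [Fintype ι] {x : ι → ℝ} (hx : ∀ i, 0 ≤ x i) :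
    (Fintype.card ι : ℝ) ^ Fintype.card ι * ∏ i, x i ≤ (∑ i, x i) ^ Fintype.card ι := by
  rcases Nat.eq_zero_or_pos (Fintype.card ι) with h0 | hpos
  · simp [h0, Finset.univ_eq_empty_iff.mpr (Fintype.card_eq_zero_iff.mp h0)]
  have hcard : (0 : ℝ) < Fintype.card ι := by exact_mod_cast hpos
  have amgm := Real.geom_mean_le_arith_mean Finset.univ (fun _ => 1) x (fun _ _ => zero_le_one)
    (by simpa using hcard) (fun i _ => hx i)
  simp only [Real.rpow_one, Finset.sum_const, Finset.card_univ, nsmul_eq_mul, mul_one,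
    one_mul] at amgm
  rw [Real.rpow_inv_le_iff_of_pos (Finset.prod_nonneg fun i _ => hx i)
    (div_nonneg (Finset.sum_nonneg fun i _ => hx i) hcard.le) hcard, Real.rpow_natCast,
    div_pow, le_div_iff₀ (by positivity)] at amgm
  linarith

def orthantCap {ι : Type*} [Fintype ι] (u : ι → ℝ) (c : ℝ) : Set (ι → ℝ) :=
  {z | (∀ i, 0 ≤ z i) ∧ ∑ i, u i * z i ≤ c}

section

variable {ι : Type*} [Fintype ι]

theorem measurableSet_orthantCap (u : ι → ℝ) (c : ℝ) : MeasurableSet (orthantCap u c) := by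
  unfold orthantCap; measurability

theorem orthantCap_eq_empty {u : ι → ℝ} (hu : ∀ i, 0 ≤ u i) {c : ℝ} (hc : c < 0) :
    orthantCap u c = ∅ :=
  Set.eq_empty_of_forall_notMem fun _ ⟨hz, hsum⟩ =>
    (hsum.trans_lt hc).not_ge (Finset.sum_nonneg fun i _ => mul_nonneg (hu i) (hz i))

theorem volume_orthantCap_eq_top {a u : ι → ℝ} (ha : ∀ i, 0 < a i) (hu : ∃ i, u i ≤ 0) :
    volume (orthantCap u (∑ i, u i * a i)) = ⊤ := by
  classical
  obtain ⟨i, hi⟩ := hu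
  set J : ι → Set ℝ := fun j => if u j ≤ 0 then Set.Ici (a j) else Set.Icc 0 (a j)
  have hbox : Set.univ.pi J ⊆ orthantCap u (∑ i, u i * a i) := by
    intro z hz
    have hJ : ∀ j, 0 ≤ z j ∧ u j * z j ≤ u j * a j := by
      intro j
      have hzj := hz j (Set.mem_univ j)
      by_cases huj : u j ≤ 0
      · simp only [J, if_pos huj, Set.mem_Ici] at hzj
        exact ⟨(ha j).le.trans hzj, mul_le_mul_of_nonpos_left hzj huj⟩
      · simp only [J, if_neg huj, Set.mem_Icc] at hzj
        exact ⟨hzj.1, mul_le_mul_of_nonneg_left hzj.2 (le_of_not_ge huj)⟩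
    exact ⟨fun j => (hJ j).1, Finset.sum_le_sum fun j _ => (hJ j).2⟩
  have hJi : volume (J i) = ⊤ := by simp [J, hi]
  have hJ0 : ∀ j, volume (J j) ≠ 0 := fun j => by by_cases huj : u j ≤ 0 <;> simp [J, huj, ha j]
  refine top_unique (le_of_eq_of_le ?_ (measure_mono hbox))
  rw [volume_pi_pi]
  exact (WithTop.prod_eq_top (Finset.mem_univ i) hJi fun j _ => hJ0 j).symm

end

theorem volume_eq_lintegral_cons {n : ℕ} {S : Set (Fin (n + 1) → ℝ)} (hS : MeasurableSet S) :
    volume S = ∫⁻ x, volume {y : Fin n → ℝ | Fin.cons x y ∈ S} := by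
  have h := (volume_preserving_piFinSuccAbove (fun _ : Fin (n + 1) => ℝ) 0).symm
  rw [← h.measure_preimage hS.nullMeasurableSet, Measure.volume_eq_prod,
    Measure.prod_apply (hS.preimage (MeasurableEquiv.measurable _))]
  simp_rw [MeasurableEquiv.piFinSuccAbove_symm_apply, Fin.insertNthEquiv, Fin.insertNth_zero']
  rfl

theorem cons_preimage_orthantCap {n : ℕ} (u : Fin (n + 1) → ℝ) (c x : ℝ) :
    {y : Fin n → ℝ | Fin.cons x y ∈ orthantCap u c} =
      if 0 ≤ x then orthantCap (Fin.tail u) (c - u 0 * x) else ∅ := by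
  ext y
  split_ifs with hx
  · simp [orthantCap, Fin.forall_fin_succ, Fin.sum_univ_succ, hx, Fin.tail, le_sub_iff_add_le']
  · simp [orthantCap, Fin.forall_fin_succ, hx]

theorem lintegral_Icc_ofReal_sub_mul_pow_div (n : ℕ) {b c K : ℝ} (hb : 0 < b) (hc : 0 ≤ c)
    (hK : 0 < K) :
    ∫⁻ x in Set.Icc 0 (c / b), ENNReal.ofReal ((c - b * x) ^ n / K) =
      ENNReal.ofReal (c ^ (n + 1) / ((n + 1) * b * K)) := by
  have hnonneg : 0 ≤ᵐ[volume.restrict (Set.Icc 0 (c / b))] fun x => (c - b * x) ^ n / K := by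
    filter_upwards [ae_restrict_mem measurableSet_Icc] with x hx
    have : b * x ≤ c := (le_div_iff₀' hb).mp hx.2
    exact div_nonneg (pow_nonneg (by linarith) n) hK.le
  rw [← ofReal_integral_eq_lintegral_ofReal (by fun_prop : Continuous _).integrableOn_Icc hnonneg,
    integral_Icc_eq_integral_Ioc, ← intervalIntegral.integral_of_le (by positivity),
    intervalIntegral.integral_comp_sub_mul (fun t => t ^ n / K) hb.ne',
    intervalIntegral.integral_div, integral_pow]
  congr 1
  simp only [mul_div_cancel₀ _ hb.ne', mul_zero, sub_self, sub_zero, ne_eq, Nat.add_one_ne_zero,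
    not_false_eq_true, zero_pow, smul_eq_mul]
  field_simp

theorem volume_orthantCap {n : ℕ} {u : Fin n → ℝ} (hu : ∀ i, 0 < u i) {c : ℝ} (hc : 0 ≤ c) :
    volume (orthantCap u c) = ENNReal.ofReal (c ^ n / (n.factorial * ∏ i, u i)) := by
  induction n generalizing c with
  | zero =>
    have huniv : orthantCap u c = Set.univ := by ext z; simp [orthantCap, hc]
    simp [huniv, volume_pi]
  | succ n ih =>
    have hu0 := hu 0
    have htail : ∀ i, 0 < Fin.tail u i := fun i => hu i.succ
    set K : ℝ := n.factorial * ∏ i, Fin.tail u i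
    have hslice : ∀ x, volume {y : Fin n → ℝ | Fin.cons x y ∈ orthantCap u c} =
        (Set.Icc 0 (c / u 0)).indicator (fun x => ENNReal.ofReal ((c - u 0 * x) ^ n / K)) x := by
      intro x
      rw [cons_preimage_orthantCap]
      by_cases hx : x ∈ Set.Icc 0 (c / u 0)
      · have hcx : 0 ≤ c - u 0 * x := sub_nonneg.mpr ((le_div_iff₀' hu0).mp hx.2)
        rw [if_pos hx.1, ih htail hcx, Set.indicator_of_mem hx]
      · rw [Set.indicator_of_notMem hx]
        split_ifs with hx0
        · have hcx : c - u 0 * x < 0 :=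
            sub_neg.mpr ((div_lt_iff₀' hu0).mp (lt_of_not_ge fun h => hx ⟨hx0, h⟩))
          rw [orthantCap_eq_empty (fun i => (htail i).le) hcx, measure_empty]
        · exact measure_empty
    have hK : 0 < K := mul_pos (by positivity) (Finset.prod_pos fun i _ => htail i)
    rw [volume_eq_lintegral_cons (measurableSet_orthantCap u c), funext hslice,
      lintegral_indicator measurableSet_Icc, lintegral_Icc_ofReal_sub_mul_pow_div n hu0 hc hK,
      Fin.prod_univ_succ, Nat.factorial_succ]
    congr 1
    push_cast
    simp only [K, Fin.tail]
    ring

theorem ofReal_le_volume_orthantCap {d : ℕ} {a u : Fin d → ℝ} (ha : ∀ i, 0 < a i)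
    (hu : ∀ i, 0 < u i) :
    ENNReal.ofReal ((d : ℝ) ^ d / d.factorial * ∏ i, a i) ≤
      volume (orthantCap u (∑ i, u i * a i)) := by
  have hua : ∀ i, 0 < u i * a i := fun i => mul_pos (hu i) (ha i)
  rw [volume_orthantCap hu (Finset.sum_nonneg fun i _ => (hua i).le)]
  refine ENNReal.ofReal_le_ofReal ?_
  have amgm := card_pow_mul_prod_le_sum_pow fun i => (hua i).le
  rw [Fintype.card_fin, Finset.prod_mul_distrib] at amgm
  have hprod : 0 < ∏ i, u i := Finset.prod_pos fun i _ => hu i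
  rw [div_mul_eq_mul_div, div_le_div_iff₀ (by positivity) (by positivity)]
  calc (d : ℝ) ^ d * (∏ i, a i) * (d.factorial * ∏ i, u i)
      = (d : ℝ) ^ d * ((∏ i, u i) * ∏ i, a i) * d.factorial := by ring
    _ ≤ (∑ i, u i * a i) ^ d * d.factorial := by gcongr

theorem le_volume_orthantCap {d : ℕ} {a : Fin d → ℝ} (ha : ∀ i, 0 < a i) (u : Fin d → ℝ) :
    ENNReal.ofReal ((d : ℝ) ^ d / d.factorial * ∏ i, a i) ≤
      volume (orthantCap u (∑ i, u i * a i)) := by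
  by_cases hu : ∀ i, 0 < u i
  · exact ofReal_le_volume_orthantCap ha hu
  · push Not at hu
    rw [volume_orthantCap_eq_top ha hu]
    exact le_top

theorem volume_orthantCap_inv {d : ℕ} {a : Fin d → ℝ} (ha : ∀ i, 0 < a i) :
    volume (orthantCap (fun i => 1 / a i) (∑ i, 1 / a i * a i)) =
      ENNReal.ofReal ((d : ℝ) ^ d / d.factorial * ∏ i, a i) := by
  have hsum : ∑ i, 1 / a i * a i = d := by simp [fun i => (ha i).ne']
  rw [volume_orthantCap (fun i => one_div_pos.mpr (ha i)) (hsum ▸ d.cast_nonneg), hsum]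
  simp only [one_div, Finset.prod_inv_distrib]
  field_simp

/-- Among all closed half-spaces whose boundary hyperplane passes through
`a ∈ (0,∞)^d`, the minimum volume cut off from the orthant `[0,∞)^d` equals
`(d^d / d!) ∏ i, a i`, and the minimum is attained by the half-space
`{z : ∑ i, z i / a i ≤ d}`, i.e. by `u = (1/a₁, …, 1/a_d)`. -/
theorem statement4 (d : ℕ) (hd : 1 ≤ d) (a : Fin d → ℝ) (ha : ∀ i, 0 < a i) :
    (⨅ (u : Fin d → ℝ) (_ : u ≠ 0),
        MeasureTheory.volume
          {z : Fin d → ℝ | (∀ i, 0 ≤ z i) ∧ ∑ i, u i * z i ≤ ∑ i, u i * a i}) =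
      ENNReal.ofReal (((d : ℝ) ^ d / d.factorial) * ∏ i, a i) ∧
    MeasureTheory.volume
        {z : Fin d → ℝ | (∀ i, 0 ≤ z i) ∧ ∑ i, (1 / a i) * z i ≤ ∑ i, (1 / a i) * a i} =
      ENNReal.ofReal (((d : ℝ) ^ d / d.factorial) * ∏ i, a i) := by
  have hinv := volume_orthantCap_inv ha
  have hinv_ne : (fun i => 1 / a i) ≠ 0 := fun h => by
    simpa [(ha _).ne'] using congrFun h ⟨0, hd⟩
  exact ⟨le_antisymm (iInf₂_le_of_le _ hinv_ne hinv.le)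
    (le_iInf₂ fun u _ => le_volume_orthantCap ha u), hinv⟩
end

section
/- Let X ⊆ (0, ∞)^d be a set of points and let z⁰ ∈ X. Then the following are equivalent: (i) there exists u ∈ (0, ∞)^d such that ⟨u, z⁰⟩ < ⟨u, z⟩ for every z ∈ X \ {z⁰} (i.e., z⁰ lies on a hyperplane with outward normal having all coordinates strictly negative which strictly separates z⁰ from the rest of X, so z⁰ is cone-extreme with respect to X); (ii) the petal S⁻(z⁰) is not contained in the union ∪_{z ∈ X \ {z⁰}} S⁻(z). -/
/-- A point `z⁰` of `X ⊆ (0,∞)^d` is cone-extreme with respect to `X` (i.e. some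
hyperplane through `z⁰` with normal `u ∈ (0,∞)^d` strictly separates `z⁰` from
`X \ {z⁰}`) if and only if the petal
`S⁻(z⁰) = {w ∈ (0,∞)^d : ∑ i, z⁰ i / w i ≤ d}` is not covered by the union of the
petals of the other points of `X`. -/
theorem statement7 (d : ℕ) (hd : 2 ≤ d) (X : Set (Fin d → ℝ))
    (hX : ∀ x ∈ X, ∀ i, 0 < x i) (z0 : Fin d → ℝ) (hz0 : z0 ∈ X) :
    (∃ u : Fin d → ℝ, (∀ i, 0 < u i) ∧
        ∀ z ∈ X \ {z0}, ∑ i, u i * z0 i < ∑ i, u i * z i) ↔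
      ¬ ({w : Fin d → ℝ | (∀ i, 0 < w i) ∧ ∑ i, z0 i / w i ≤ (d : ℝ)} ⊆
          ⋃ z ∈ X \ {z0}, {w : Fin d → ℝ | (∀ i, 0 < w i) ∧ ∑ i, z i / w i ≤ (d : ℝ)}) := by
  have hd0 : (0:ℝ) < d := by positivity
  constructor
  · rintro ⟨u, hu, hsep⟩ hsub
    have hs0 : 0 < ∑ i, u i * z0 i :=
      Finset.sum_pos (fun i _ => mul_pos (hu i) (hX z0 hz0 i))
        ⟨⟨0, by omega⟩, Finset.mem_univ _⟩
    set s : ℝ := (∑ i, u i * z0 i) / d with hs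
    have hspos : 0 < s := div_pos hs0 hd0
    set w : Fin d → ℝ := fun i => s / u i with hwdef
    have hw : ∀ i, 0 < w i := fun i => div_pos hspos (hu i)
    have hkey : ∀ z : Fin d → ℝ, ∑ i, z i / w i = (∑ i, u i * z i) / s := by
      intro z
      rw [Finset.sum_div]
      refine Finset.sum_congr rfl fun i _ => ?_
      rw [hwdef]
      rw [div_div_eq_mul_div, mul_comm]
    have hmem : w ∈ {w : Fin d → ℝ | (∀ i, 0 < w i) ∧ ∑ i, z0 i / w i ≤ (d : ℝ)} := by
      refine ⟨hw, ?_⟩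
      rw [hkey, hs]
      rw [div_div_eq_mul_div, mul_comm, mul_div_assoc, div_self hs0.ne', mul_one]
    have := hsub hmem
    simp only [Set.mem_iUnion, Set.mem_setOf_eq] at this
    obtain ⟨z, hz, _, hle⟩ := this
    have hlt : (d:ℝ) < ∑ i, z i / w i := by
      rw [hkey, hs, div_div_eq_mul_div, mul_comm, mul_div_assoc]
      have h1 : 1 < (∑ i, u i * z i) / (∑ i, u i * z0 i) :=
        (one_lt_div hs0).2 (hsep z hz)
      nlinarith
    linarith
  · intro hns
    rw [Set.not_subset] at hns
    obtain ⟨w, ⟨hw, hwz0⟩, hnot⟩ := hns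
    refine ⟨fun i => 1 / w i, fun i => one_div_pos.2 (hw i), fun z hz => ?_⟩
    have hgt : ¬ ((∀ i, 0 < w i) ∧ ∑ i, z i / w i ≤ (d : ℝ)) := by
      intro hc
      exact hnot (Set.mem_iUnion.2 ⟨z, Set.mem_iUnion.2 ⟨hz, hc⟩⟩)
    push_neg at hgt
    have hlt := hgt hw
    calc ∑ i, 1 / w i * z0 i = ∑ i, z0 i / w i := by
          refine Finset.sum_congr rfl fun i _ => ?_; ring
      _ ≤ (d:ℝ) := hwz0
      _ < ∑ i, z i / w i := hlt
      _ = ∑ i, 1 / w i * z i := by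
          refine Finset.sum_congr rfl fun i _ => ?_; ring
end

section
/- Let λ > 0 and z⁰ ∈ (0,∞)^d with T^{(λ)}(z⁰) = (v⁰, h⁰). Then for every z ∈ (0,∞)^d with T^{(λ)}(z) = (v, h), one has ∑_{i=1}^d z_i/z⁰_i ≤ d if and only if h ≤ h⁰ − G(v − v⁰). That is, T^{(λ)} maps the half-space H⁺(z⁰) = {z : ∑ z_i/z⁰_i ≤ d} (intersected with (0,∞)^d) onto the down cone-like grain Π^↓((v⁰,h⁰)) := {(v,h) ∈ V × ℝ : h ≤ h⁰ − G(v − v⁰)}. -/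
noncomputable section

/-- The hyperplane `V = {x ∈ ℝ^d : ∑ i, x i = 0}` as a submodule of Euclidean space. -/
def Vsub (d : ℕ) : Submodule ℝ (EuclideanSpace ℝ (Fin d)) where
  carrier := {x | ∑ i, x i = 0}
  add_mem' := by
    intro a b ha hb
    simp only [Set.mem_setOf_eq] at ha hb ⊢
    simp [PiLp.add_apply, Finset.sum_add_distrib, ha, hb]
  zero_mem' := by
    simp only [Set.mem_setOf_eq]
    simp
  smul_mem' := by
    intro c x hx
    simp only [Set.mem_setOf_eq] at hx ⊢
    simp [PiLp.smul_apply, smul_eq_mul, ← Finset.mul_sum, hx]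

/-- The function `G(v) = log((1/d) ∑ i, exp (v i))`. -/
def Gfun (d : ℕ) (v : EuclideanSpace ℝ (Fin d)) : ℝ :=
  Real.log ((1 / (d : ℝ)) * ∑ i, Real.exp (v i))

/-- The scaling transform `T^{(λ)}(z) = (p_V (log z), (1/d)(log λ + ∑ i, log z i))`,
where `p_V` is the orthogonal projection onto the hyperplane `V`. -/
def Tmap (d : ℕ) (lam : ℝ) (z : EuclideanSpace ℝ (Fin d)) : Vsub d × ℝ :=
  ((Vsub d).orthogonalProjectionOnto (WithLp.toLp 2 (fun i => Real.log (z i)) : EuclideanSpace ℝ (Fin d)),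
    (1 / (d : ℝ)) * (Real.log lam + ∑ i, Real.log (z i)))

/-- The inverse scaling transform `U^{(λ)}(v,h) = λ^{-1/d} e^h e^{l(v)}`. -/
def Umap (d : ℕ) (lam : ℝ) (p : Vsub d × ℝ) : EuclideanSpace ℝ (Fin d) :=
  (WithLp.toLp 2 (fun i => lam ^ (-(1 : ℝ) / (d : ℝ)) * Real.exp p.2 *
    Real.exp ((p.1 : EuclideanSpace ℝ (Fin d)) i)) : EuclideanSpace ℝ (Fin d))

end

/-!
Write `w := log z - log z⁰`. The projection `p_V` subtracts the mean, and `G` commutes with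
translations along `(1, …, 1)`, so `G(v - v⁰) = G(p_V w) = G(w) - (h - h⁰)`, the `log λ` terms
cancelling in `h - h⁰`. The condition `h ≤ h⁰ - G(v - v⁰)` thus reads `G(w) ≤ 0`, i.e.
`(1/d) ∑ z_i / z⁰_i ≤ 1`.
-/

lemma mem_Vsub {d : ℕ} {x : EuclideanSpace ℝ (Fin d)} : x ∈ Vsub d ↔ ∑ i, x i = 0 :=
  Iff.rfl

lemma orthogonalProjectionOnto_Vsub_apply {d : ℕ} (hd : 0 < d) (x : EuclideanSpace ℝ (Fin d))
    (i : Fin d) :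
    ((Vsub d).orthogonalProjectionOnto x : EuclideanSpace ℝ (Fin d)) i = x i - (∑ j, x j) / d := by
  have hd' : (d : ℝ) ≠ 0 := by positivity
  set y : EuclideanSpace ℝ (Fin d) := WithLp.toLp 2 fun i => x i - (∑ j, x j) / d
  suffices h : ((Vsub d).orthogonalProjectionOnto x : EuclideanSpace ℝ (Fin d)) = y from
    congrArg (· i) h
  rw [← Submodule.starProjection_apply]
  refine Submodule.eq_starProjection_of_mem_of_inner_eq_zero ?_ fun w hw => ?_
  · rw [mem_Vsub]
    simp only [y, Finset.sum_sub_distrib, Finset.sum_const, Finset.card_univ,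
      Fintype.card_fin, nsmul_eq_mul]
    field_simp
    ring
  · simp only [y, PiLp.inner_apply, RCLike.inner_apply, conj_trivial, PiLp.sub_apply,
      sub_sub_cancel, ← Finset.sum_mul, mem_Vsub.mp hw, zero_mul]

lemma Gfun_eq_sub_of_apply_eq_sub {d : ℕ} (hd : 0 < d) {x y : EuclideanSpace ℝ (Fin d)} {c : ℝ}
    (h : ∀ i, y i = x i - c) : Gfun d y = Gfun d x - c := by
  have : Nonempty (Fin d) := ⟨⟨0, hd⟩⟩
  have hsum : 0 < ∑ i, Real.exp (x i) :=
    Finset.sum_pos (fun i _ => Real.exp_pos _) Finset.univ_nonempty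
  simp only [Gfun, h, Real.exp_sub, ← Finset.sum_div, mul_div_assoc']
  rw [Real.log_div (by positivity) (Real.exp_ne_zero c), Real.log_exp]

lemma Gfun_nonpos_iff {d : ℕ} (hd : 0 < d) (x : EuclideanSpace ℝ (Fin d)) :
    Gfun d x ≤ 0 ↔ ∑ i, Real.exp (x i) ≤ d := by
  have : Nonempty (Fin d) := ⟨⟨0, hd⟩⟩
  have hsum : 0 < ∑ i, Real.exp (x i) :=
    Finset.sum_pos (fun i _ => Real.exp_pos _) Finset.univ_nonempty
  rw [Gfun, Real.log_nonpos_iff (by positivity), one_div_mul_eq_div, div_le_one (by positivity)]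

lemma Tmap_fst_apply {d : ℕ} (hd : 0 < d) (lam : ℝ) (z : EuclideanSpace ℝ (Fin d)) (i : Fin d) :
    ((Tmap d lam z).1 : EuclideanSpace ℝ (Fin d)) i =
      Real.log (z i) - (∑ j, Real.log (z j)) / d :=
  orthogonalProjectionOnto_Vsub_apply hd _ i

lemma Tmap_snd_sub_Tmap_snd (d : ℕ) (lam : ℝ) (z z0 : EuclideanSpace ℝ (Fin d)) :
    (Tmap d lam z).2 - (Tmap d lam z0).2 =
      (∑ j, Real.log (z j)) / d - (∑ j, Real.log (z0 j)) / d := by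
  simp only [Tmap]
  ring

theorem statement10_general (d : ℕ) (hd : 2 ≤ d) (lam : ℝ)
    (z0 : EuclideanSpace ℝ (Fin d)) (hz0 : ∀ i, 0 < z0 i)
    (z : EuclideanSpace ℝ (Fin d)) (hz : ∀ i, 0 < z i) :
    (∑ i, z i / z0 i ≤ (d : ℝ)) ↔
      (Tmap d lam z).2 ≤ (Tmap d lam z0).2 -
        Gfun d (((Tmap d lam z).1 : EuclideanSpace ℝ (Fin d)) -
          ((Tmap d lam z0).1 : EuclideanSpace ℝ (Fin d))) := by
  have hd0 : 0 < d := by omega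
  set w : EuclideanSpace ℝ (Fin d) := WithLp.toLp 2 fun i => Real.log (z i) - Real.log (z0 i)
  have hG : Gfun d (((Tmap d lam z).1 : EuclideanSpace ℝ (Fin d)) -
      ((Tmap d lam z0).1 : EuclideanSpace ℝ (Fin d))) =
      Gfun d w - ((Tmap d lam z).2 - (Tmap d lam z0).2) := by
    refine Gfun_eq_sub_of_apply_eq_sub hd0 fun i => ?_
    rw [PiLp.sub_apply, Tmap_fst_apply hd0, Tmap_fst_apply hd0, Tmap_snd_sub_Tmap_snd]
    simp only [w]
    ring
  have hexp : ∑ i, Real.exp (w i) = ∑ i, z i / z0 i := by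
    simp only [w, Real.exp_sub, Real.exp_log (hz _), Real.exp_log (hz0 _)]
  rw [hG, ← hexp, ← Gfun_nonpos_iff hd0]
  constructor <;> intro h <;> linarith

/-- `T^{(λ)}` maps the half-space `H⁺(z⁰) = {z : ∑ i, z i / z⁰ i ≤ d}` (intersected
with the positive orthant) onto the down cone-like grain
`Π^↓(T^{(λ)}(z⁰)) = {(v,h) : h ≤ h⁰ − G(v − v⁰)}`: for `z, z⁰ ∈ (0,∞)^d` with
`T^{(λ)}(z) = (v,h)` and `T^{(λ)}(z⁰) = (v⁰,h⁰)`, one has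
`∑ i, z i / z⁰ i ≤ d ↔ h ≤ h⁰ − G(v − v⁰)`. -/
theorem statement10 (d : ℕ) (hd : 2 ≤ d) (lam : ℝ) (hlam : 0 < lam)
    (z0 : EuclideanSpace ℝ (Fin d)) (hz0 : ∀ i, 0 < z0 i)
    (z : EuclideanSpace ℝ (Fin d)) (hz : ∀ i, 0 < z i) :
    (∑ i, z i / z0 i ≤ (d : ℝ)) ↔
      (Tmap d lam z).2 ≤ (Tmap d lam z0).2 -
        Gfun d (((Tmap d lam z).1 : EuclideanSpace ℝ (Fin d)) -
          ((Tmap d lam z0).1 : EuclideanSpace ℝ (Fin d))) :=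
  statement10_general d hd lam z0 hz0 z hz
end

section
/- Let d ≥ 2, λ > 0, and let φ : ℝ^{d−1} → ℝ^d be a linear isometry whose range is V = {x ∈ ℝ^d : ∑ x_i = 0}. Define F : ℝ^{d−1} × ℝ → ℝ^d by F(v, h) := (λ^{−1/d} e^h e^{φ(v)_1}, …, λ^{−1/d} e^h e^{φ(v)_d}). Then the pushforward under F of the measure on ℝ^{d−1} × ℝ with density (v, h) ↦ √d · e^{dh} with respect to Lebesgue measure equals λ times Lebesgue measure on ℝ^d restricted to (0,∞)^d. -/
/-!
Write `𝟙` for the all-ones vector of `ℝ^d` and `c = λ^{-1/d}`. Then `F = exp ∘ K` coordinatewise,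
where `K (v, h) = φ v + (h + log c) • 𝟙`. Since `𝟙 ⊥ V` and `‖𝟙‖ = √d`, the map
`(v, s) ↦ φ v + s • 𝟙/√d` is a linear isometry from the `ℓ²` sum `ℝ^{d-1} ⊕ ℝ` onto `ℝ^d`, so `K`
pushes Lebesgue measure to `(√d)⁻¹` times Lebesgue measure. The coordinatewise exponential has
Jacobian `exp (∑ i, y i)`, which along `K` is `e^{dh} / λ`; so the density `√d e^{dh}` is `√d λ`
times the Jacobian, and the change of variables formula gives `λ` times Lebesgue measure on the
image `(0,∞)^d`.
-/

open MeasureTheory Real Set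
open scoped InnerProductSpace

theorem MeasureTheory.Measure.map_withDensity_comp {α β : Type*} [MeasurableSpace α]
    [MeasurableSpace β] {μ : Measure α} {f : α → β} {g : β → ENNReal} (hf : Measurable f)
    (hg : Measurable g) : (μ.withDensity (g ∘ f)).map f = (μ.map f).withDensity g := by
  ext s hs
  rw [Measure.map_apply hf hs, withDensity_apply _ (hf hs), withDensity_apply _ hs,
    setLIntegral_map hs hg hf]
  rfl

section CoordExp

variable {ι : Type*}

noncomputable def coordExp (x : EuclideanSpace ℝ ι) : EuclideanSpace ℝ ι :=
  WithLp.toLp 2 fun i => Real.exp (x i)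

@[simp]
lemma coordExp_apply (x : EuclideanSpace ℝ ι) (i : ι) : coordExp x i = Real.exp (x i) := rfl

lemma continuous_coordExp : Continuous (coordExp (ι := ι)) := by
  unfold coordExp
  fun_prop

lemma coordExp_injective : Function.Injective (coordExp (ι := ι)) := fun x y h => by
  ext i
  exact Real.exp_injective (congrArg (· i) h)

lemma range_coordExp : range (coordExp (ι := ι)) = {z | ∀ i, 0 < z i} := by
  refine Subset.antisymm (range_subset_iff.2 fun x i => Real.exp_pos _) fun z hz => ?_
  refine ⟨WithLp.toLp 2 fun i => Real.log (z i), ?_⟩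
  ext i
  exact Real.exp_log (hz i)

variable [Fintype ι]

lemma hasFDerivAt_coordExp [DecidableEq ι] (x : EuclideanSpace ℝ ι) :
    HasFDerivAt coordExp
      (Matrix.toEuclideanLin (Matrix.diagonal fun i => Real.exp (x i))).toContinuousLinearMap x := by
  refine (hasStrictFDerivAt_euclidean.2 fun i => ?_).hasFDerivAt
  refine ((Real.hasStrictDerivAt_exp (x i)).comp_hasStrictFDerivAt x
    (EuclideanSpace.proj i : EuclideanSpace ℝ ι →L[ℝ] ℝ).hasStrictFDerivAt).congr_fderiv ?_
  ext w
  simp [Matrix.mulVec_diagonal]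

lemma det_toEuclideanLin_diagonal [DecidableEq ι] (z : ι → ℝ) :
    LinearMap.det (Matrix.toEuclideanLin (Matrix.diagonal z)) = ∏ i, z i := by
  rw [Matrix.toEuclideanLin_eq_toLin_orthonormal, LinearMap.det_toLin, Matrix.det_diagonal]

theorem map_coordExp_withDensity :
    (volume.withDensity fun x => ENNReal.ofReal (Real.exp (∑ i, x i))).map coordExp =
      volume.restrict {z : EuclideanSpace ℝ ι | ∀ i, 0 < z i} := by
  classical
  have := map_withDensity_abs_det_fderiv_eq_addHaar (volume : Measure (EuclideanSpace ℝ ι))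
    MeasurableSet.univ.nullMeasurableSet
    (fun x _ => (hasFDerivAt_coordExp x).hasFDerivWithinAt) coordExp_injective.injOn
  simpa [ContinuousLinearMap.det, det_toEuclideanLin_diagonal, ← Real.exp_sum, range_coordExp]
    using this

theorem map_coordExp_comp_withDensity {α : Type*} [MeasurableSpace α] {μ : Measure α}
    {K : α → EuclideanSpace ℝ ι} (hK : Measurable K) {r : ENNReal} (hμK : μ.map K = r • volume) :
    (μ.withDensity fun p => ENNReal.ofReal (Real.exp (∑ i, K p i))).map (coordExp ∘ K) =
      r • volume.restrict {z : EuclideanSpace ℝ ι | ∀ i, 0 < z i} := by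
  have hg : Measurable fun x : EuclideanSpace ℝ ι => ENNReal.ofReal (Real.exp (∑ i, x i)) := by
    fun_prop
  rw [← Measure.map_map continuous_coordExp.measurable hK,
    ← Function.comp_def (fun x => ENNReal.ofReal (Real.exp (∑ i, x i))) K,
    Measure.map_withDensity_comp hK hg, hμK, withDensity_smul_measure, Measure.map_smul,
    map_coordExp_withDensity]

end CoordExp

section UnitNormal

variable {W E : Type*} [NormedAddCommGroup W] [InnerProductSpace ℝ W]
  [NormedAddCommGroup E] [InnerProductSpace ℝ E]

noncomputable def LinearIsometry.prodUnitNormalEquiv (φ : W →ₗᵢ[ℝ] E) (u : E) (hu : ‖u‖ = 1)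
    (hφ : range φ = ((ℝ ∙ u)ᗮ : Set E)) : WithLp 2 (W × ℝ) ≃ₗᵢ[ℝ] E :=
  LinearIsometryEquiv.ofSurjective
    { toLinearMap := (φ.toLinearMap.coprod (LinearMap.toSpanSingleton ℝ E u)) ∘ₗ
        (WithLp.linearEquiv 2 ℝ (W × ℝ)).toLinearMap
      norm_map' := fun x => by
        have horth : ⟪φ x.fst, x.snd • u⟫_ℝ = 0 := by
          have : φ x.fst ∈ (ℝ ∙ u)ᗮ := by
            rw [← SetLike.mem_coe, ← hφ]
            exact mem_range_self _
          rw [Submodule.mem_orthogonal_singleton_iff_inner_right] at this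
          rw [inner_smul_right, real_inner_comm, this, mul_zero]
        rw [← sq_eq_sq₀ (norm_nonneg _) (norm_nonneg _), WithLp.prod_norm_sq_eq_of_L2]
        change ‖φ x.fst + x.snd • u‖ ^ 2 = _
        rw [norm_add_sq_real, horth, norm_smul, hu, mul_one, φ.norm_map]
        ring }
    fun x => by
      obtain ⟨w, hw⟩ : x - ⟪u, x⟫_ℝ • u ∈ range φ := by
        rw [hφ, SetLike.mem_coe, Submodule.mem_orthogonal_singleton_iff_inner_right,
          inner_sub_right, inner_smul_right, real_inner_self_eq_norm_sq, hu]
        ring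
      exact ⟨WithLp.toLp 2 (w, ⟪u, x⟫_ℝ), by simp [hw]⟩

@[simp]
lemma LinearIsometry.prodUnitNormalEquiv_apply (φ : W →ₗᵢ[ℝ] E) (u : E) (hu : ‖u‖ = 1)
    (hφ : range φ = ((ℝ ∙ u)ᗮ : Set E)) (x : WithLp 2 (W × ℝ)) :
    φ.prodUnitNormalEquiv u hu hφ x = φ x.fst + x.snd • u :=
  rfl

variable [FiniteDimensional ℝ W] [FiniteDimensional ℝ E] [MeasurableSpace W] [BorelSpace W]
  [MeasurableSpace E] [BorelSpace E]

theorem map_add_smul_volume_of_range_eq_orthogonal (φ : W →ₗᵢ[ℝ] E) {a : E} (ha : a ≠ 0)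
    (hφ : range φ = ((ℝ ∙ a)ᗮ : Set E)) :
    (volume : Measure (W × ℝ)).map (fun p => φ p.1 + p.2 • a) =
      ENNReal.ofReal ‖a‖⁻¹ • volume := by
  have ha' : ‖a‖ ≠ 0 := norm_ne_zero_iff.2 ha
  have hspan : (ℝ ∙ ‖a‖⁻¹ • a) = (ℝ ∙ a) :=
    Submodule.span_singleton_smul_eq (inv_ne_zero ha').isUnit _
  have hu : ‖‖a‖⁻¹ • a‖ = 1 := norm_smul_inv_norm ha
  let P := φ.prodUnitNormalEquiv _ hu (by rw [hspan]; exact hφ)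
  have hP : MeasurePreserving (P ∘ WithLp.toLp 2) :=
    P.measurePreserving.comp (WithLp.volume_preserving_toLp W ℝ)
  have hfun : (fun p : W × ℝ => φ p.1 + p.2 • a) =
      (P ∘ WithLp.toLp 2) ∘ Prod.map id (‖a‖ * ·) := by
    ext p
    simp [P, smul_smul, mul_comm ‖a‖, mul_inv_cancel_right₀ ha']
  rw [hfun, ← Measure.map_map hP.measurable (measurable_id.prodMap (measurable_const_mul _)),
    Measure.volume_eq_prod, ← Measure.map_prod_map _ _ measurable_id (measurable_const_mul _),
    Measure.map_id, Real.map_volume_mul_left ha', Measure.prod_smul_right, Measure.map_smul,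
    ← Measure.volume_eq_prod, hP.map_eq, abs_inv, abs_norm]

end UnitNormal

section SumZeroHyperplane

variable {ι : Type*} [Fintype ι] {W : Type*} [NormedAddCommGroup W] [InnerProductSpace ℝ W]
  {φ : W →ₗᵢ[ℝ] EuclideanSpace ℝ ι}

lemma EuclideanSpace.setOf_sum_eq_zero :
    {x : EuclideanSpace ℝ ι | ∑ i, x i = 0} = ((ℝ ∙ WithLp.toLp 2 (1 : ι → ℝ))ᗮ : Set _) := by
  ext x
  simp [Submodule.mem_orthogonal_singleton_iff_inner_right, PiLp.inner_apply]

lemma EuclideanSpace.norm_toLp_one : ‖WithLp.toLp 2 (1 : ι → ℝ)‖ = √(Fintype.card ι) := by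
  simp [EuclideanSpace.norm_eq]

lemma sum_add_smul_one_of_range_eq (hφ : range φ = {x | ∑ i, x i = 0}) (w : W) (s : ℝ) :
    ∑ i, (φ w + s • WithLp.toLp 2 (1 : ι → ℝ)) i = Fintype.card ι * s := by
  have hw : ∑ i, φ w i = 0 := by
    have := mem_range_self (f := φ) w
    rwa [hφ] at this
  simp [Finset.sum_add_distrib, hw]

theorem map_add_smul_one_volume_of_range_eq [Nonempty ι] [FiniteDimensional ℝ W]
    [MeasurableSpace W] [BorelSpace W] (hφ : range φ = {x | ∑ i, x i = 0}) :
    (volume : Measure (W × ℝ)).map (fun p => φ p.1 + p.2 • WithLp.toLp 2 (1 : ι → ℝ)) =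
      ENNReal.ofReal (√(Fintype.card ι))⁻¹ • volume := by
  have hone : WithLp.toLp 2 (1 : ι → ℝ) ≠ 0 := by
    rw [← norm_ne_zero_iff, EuclideanSpace.norm_toLp_one]
    positivity
  rw [map_add_smul_volume_of_range_eq_orthogonal φ hone
    (hφ.trans EuclideanSpace.setOf_sum_eq_zero), EuclideanSpace.norm_toLp_one]

end SumZeroHyperplane

/-- Let `φ : ℝ^{d−1} → ℝ^d` be a linear isometry with range the hyperplane
`V = {x : ∑ i, x i = 0}`, and let `F(v,h) = λ^{-1/d} e^h e^{φ(v)}` be the inverse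
scaling transform expressed in orthonormal coordinates of `V`.  Then the pushforward
under `F` of the measure with density `√d · e^{dh}` on `ℝ^{d−1} × ℝ` equals `λ` times
Lebesgue measure restricted to the positive orthant `(0,∞)^d`. -/
theorem statement14 (d : ℕ) (hd : 2 ≤ d) (lam : ℝ) (hlam : 0 < lam)
    (φ : EuclideanSpace ℝ (Fin (d - 1)) →ₗᵢ[ℝ] EuclideanSpace ℝ (Fin d))
    (hφ : Set.range φ = {x : EuclideanSpace ℝ (Fin d) | ∑ i, x i = 0})
    (F : EuclideanSpace ℝ (Fin (d - 1)) × ℝ → EuclideanSpace ℝ (Fin d))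
    (hF : ∀ v h i, F (v, h) i =
      lam ^ (-(1 : ℝ) / (d : ℝ)) * Real.exp h * Real.exp (φ v i)) :
    MeasureTheory.Measure.map F
        (MeasureTheory.volume.withDensity
          (fun p : EuclideanSpace ℝ (Fin (d - 1)) × ℝ =>
            ENNReal.ofReal (Real.sqrt d * Real.exp (d * p.2)))) =
      ENNReal.ofReal lam •
        MeasureTheory.volume.restrict {z : EuclideanSpace ℝ (Fin d) | ∀ i, 0 < z i} := by
  have hd0 : (0 : ℝ) < d := by exact_mod_cast (by omega : 0 < d)
  have : Nonempty (Fin d) := ⟨⟨0, by omega⟩⟩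
  set t := Real.log lam * (-(1 : ℝ) / d)
  set K := (fun p : EuclideanSpace ℝ (Fin (d - 1)) × ℝ => φ p.1 + p.2 • WithLp.toLp 2 1) ∘
    (· + (0, t))
  have hFK : F = coordExp ∘ K := by
    ext ⟨v, h⟩ i
    rw [hF, Real.rpow_def_of_pos hlam]
    simp only [K, Function.comp_apply, Prod.mk_add_mk, add_zero, coordExp_apply, PiLp.add_apply,
      PiLp.smul_apply, Pi.one_apply, smul_eq_mul, mul_one, Real.exp_add]
    ring
  have hmapK : volume.map K = ENNReal.ofReal (√d)⁻¹ • volume := by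
    rw [← Measure.map_map (by fun_prop) (measurable_add_const _), Measure.volume_eq_prod,
      map_add_right_eq_self, ← Measure.volume_eq_prod, map_add_smul_one_volume_of_range_eq hφ,
      Fintype.card_fin]
  have hsumK (p) : ∑ i, K p i = d * p.2 - Real.log lam := by
    simp only [K, Function.comp_apply, sum_add_smul_one_of_range_eq hφ, Fintype.card_fin,
      Prod.snd_add, t]
    field_simp
    ring
  have hdensity : (fun p : EuclideanSpace ℝ (Fin (d - 1)) × ℝ =>
      ENNReal.ofReal (√d * Real.exp (d * p.2))) =
      ENNReal.ofReal (√d * lam) • fun p => ENNReal.ofReal (Real.exp (∑ i, K p i)) := by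
    funext p
    rw [Pi.smul_apply, smul_eq_mul, hsumK, ← ENNReal.ofReal_mul (by positivity), Real.exp_sub,
      Real.exp_log hlam]
    congr 1
    field_simp
  rw [hdensity, withDensity_smul _ (by fun_prop), Measure.map_smul, hFK,
    map_coordExp_comp_withDensity (by fun_prop) hmapK, smul_smul,
    ← ENNReal.ofReal_mul (by positivity)]
  congr 2
  field_simp
end
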